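/- For every ℓ̌ > 0, the function ϑ ↦ Ľ_F(ℓ̌, ϑ) on ℝ has a unique global minimizer, namely ϑ* = ℓ̌ − 1/ℓ̌ if ℓ̌ > 1 and ϑ* = 0 if 0 < ℓ̌ ≤ 1, and the minimal value is Ľ_F(ℓ̌, ϑ*) = √(2 − 1/ℓ̌²) if ℓ̌ > 1 and Ľ_F(ℓ̌, ϑ*) = ℓ̌ if 0 < ℓ̌ ≤ 1. -/

import Mathlib

/-- The 2×2 pivot matrix M(ℓ,ϑ,c,s) = A − B with A = diag(ℓ,0), B = ϑ·[[c²,cs],[cs,s²]]. -/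
noncomputable def pivotM (l θ c s : ℝ) : Matrix (Fin 2) (Fin 2) ℝ :=
  !![l - θ * c ^ 2, -(θ * c * s); -(θ * c * s), -(θ * s ^ 2)]

/-- Frobenius norm: square root of the sum of squares of the entries. -/
noncomputable def frobNorm (A : Matrix (Fin 2) (Fin 2) ℝ) : ℝ :=
  Real.sqrt (∑ i, ∑ j, (A i j) ^ 2)

/-- Operator norm: the ℓ²→ℓ² operator norm, i.e. the largest singular value. -/
noncomputable def opNorm (A : Matrix (Fin 2) (Fin 2) ℝ) : ℝ :=
  ‖LinearMap.toContinuousLinearMap (Matrix.toEuclideanLin A)‖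

/-- Nuclear norm: the trace of √(AᴴA), i.e. the sum of the singular values. -/
noncomputable def nucNorm (A : Matrix (Fin 2) (Fin 2) ℝ) : ℝ :=
  ((((Matrix.posSemidef_conjTranspose_mul_self A).1.eigenvectorUnitary : Matrix (Fin 2) (Fin 2) ℝ) *
      Matrix.diagonal ((RCLike.ofReal ∘ Real.sqrt ∘
        (Matrix.posSemidef_conjTranspose_mul_self A).1.eigenvalues : Fin 2 → ℝ)) *
      star ((Matrix.posSemidef_conjTranspose_mul_self A).1.eigenvectorUnitary :
        Matrix (Fin 2) (Fin 2) ℝ))).trace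

/-- Limiting cosine č(ℓ̌) in the γ → 0 disproportional framework. -/
noncomputable def cCheck (l : ℝ) : ℝ := if 1 < l then Real.sqrt (1 - 1 / l ^ 2) else 0

/-- Limiting sine š(ℓ̌) = √(1 − č(ℓ̌)²). -/
noncomputable def sCheck (l : ℝ) : ℝ := Real.sqrt (1 - cCheck l ^ 2)

/-- Eigenvalue mapping λ̌(ℓ̌) in the γ → 0 disproportional framework. -/
noncomputable def lamCheck (l : ℝ) : ℝ := if 1 < l then l + 1 / l else 2

/-- Asymptotic Frobenius loss Ľ_F(ℓ̌, ϑ). -/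
noncomputable def lossCheckF (l θ : ℝ) : ℝ := frobNorm (pivotM l θ (cCheck l) (sCheck l))

/-- Asymptotic operator-norm loss Ľ_O(ℓ̌, ϑ). -/
noncomputable def lossCheckO (l θ : ℝ) : ℝ := opNorm (pivotM l θ (cCheck l) (sCheck l))

/-- Asymptotic nuclear-norm loss Ľ_N(ℓ̌, ϑ). -/
noncomputable def lossCheckN (l θ : ℝ) : ℝ := nucNorm (pivotM l θ (cCheck l) (sCheck l))

lemma cCheck_sq (l : ℝ) (hl : 1 < l) : cCheck l ^ 2 = 1 - 1 / l ^ 2 := by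
  have h1 : (0:ℝ) < l := by linarith
  have : (0:ℝ) ≤ 1 - 1 / l ^ 2 := by
    have : 1 / l ^ 2 ≤ 1 := by
      rw [div_le_one (by positivity)]; nlinarith
    linarith
  rw [cCheck, if_pos hl, Real.sq_sqrt this]

lemma cCheck_sq_le (l : ℝ) : cCheck l ^ 2 ≤ 1 := by
  by_cases h : 1 < l
  · rw [cCheck_sq l h]
    have : (0:ℝ) ≤ 1 / l ^ 2 := by positivity
    linarith
  · simp [cCheck, h]

lemma sCheck_sq (l : ℝ) : sCheck l ^ 2 = 1 - cCheck l ^ 2 := by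
  rw [sCheck, Real.sq_sqrt (by linarith [cCheck_sq_le l])]

lemma loss_eq (l θ : ℝ) :
    lossCheckF l θ = Real.sqrt (l ^ 2 - 2 * l * θ * cCheck l ^ 2 + θ ^ 2) := by
  have hs := sCheck_sq l
  unfold lossCheckF frobNorm pivotM
  congr 1
  simp [Fin.sum_univ_two]
  linear_combination (θ ^ 2 * (cCheck l ^ 2 + sCheck l ^ 2 + 1)) * hs

lemma loss_gt (l : ℝ) (hl : 1 < l) (θ : ℝ) :
    lossCheckF l θ = Real.sqrt ((θ - (l - 1/l)) ^ 2 + (2 - 1 / l ^ 2)) := by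
  rw [loss_eq, cCheck_sq l hl]
  have hl0 : l ≠ 0 := by positivity
  congr 1
  field_simp
  ring

lemma loss_le (l : ℝ) (hl : ¬ 1 < l) (θ : ℝ) :
    lossCheckF l θ = Real.sqrt (θ ^ 2 + l ^ 2) := by
  rw [loss_eq]
  simp [cCheck, hl]
  ring_nf

theorem optimal_frobenius_shrinker_check (l : ℝ) (hl : 0 < l) :
    (∀ θ : ℝ, θ ≠ (if 1 < l then l - 1 / l else 0) →
        lossCheckF l (if 1 < l then l - 1 / l else 0) < lossCheckF l θ) ∧
    lossCheckF l (if 1 < l then l - 1 / l else 0)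
      = (if 1 < l then Real.sqrt (2 - 1 / l ^ 2) else l) := by
  by_cases h : 1 < l
  · simp only [if_pos h]
    have hbase : (0:ℝ) ≤ 2 - 1 / l ^ 2 := by
      have : 1 / l ^ 2 ≤ 1 := by rw [div_le_one (by positivity)]; nlinarith
      linarith
    constructor
    · intro θ hθ
      rw [loss_gt l h, loss_gt l h]
      apply Real.sqrt_lt_sqrt
      · nlinarith
      · have hne : θ - (l - 1/l) ≠ 0 := sub_ne_zero.mpr hθ
        have : (θ - (l - 1/l)) ^ 2 > 0 := by positivity
        nlinarith
    · rw [loss_gt l h]; simp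
  · simp only [if_neg h]
    constructor
    · intro θ hθ
      rw [loss_le l h, loss_le l h]
      apply Real.sqrt_lt_sqrt (by positivity)
      have : θ ^ 2 > 0 := by positivity
      nlinarith
    · rw [loss_le l h]
      simp [Real.sqrt_sq hl.le]
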